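/- arXiv:math/0110118 — 4 statements merged into one kernel-verified Lean document; each statement's English description precedes it below -/
import Mathlib

section
/- For every measurable function f on ℝ² and every t > 0, the inclusions {f₂* > t} ⊆ {|f| > t}* ⊆ {f₂* ≥ t} hold. -/
/-!
`E ↦ E*` is monotone, so for fixed `x` the levels `s` with `x ∈ {|f| > s}*` form a lower set `S`
of `ℝ`, and the layer-cake formula says `f₂*(x) = |S ∩ (0, ∞)|`. A lower set containing `t`
contains `(0, t)`, and one missing `t` lies in `(-∞, t)`; this gives both inclusions.
-/

open MeasureTheory Set ENNReal Filter

/-- Classical decreasing rearrangement of an `ℝ≥0∞`-valued function. -/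
noncomputable def decRe {α : Type*} [MeasurableSpace α] (μ : Measure α)
    (g : α → ℝ≥0∞) (t : ℝ) : ℝ≥0∞ :=
  sInf {l : ℝ≥0∞ | μ {x | l < g x} ≤ ENNReal.ofReal t}

/-- `φ_E(x)`: the measure of the `x`-section of `E`. -/
noncomputable def phiSec (E : Set (ℝ × ℝ)) (x : ℝ) : ℝ≥0∞ :=
  volume {y : ℝ | (x, y) ∈ E}

/-- The two-dimensional decreasing rearrangement `E*` of a set `E ⊆ ℝ²`. -/
def starSet (E : Set (ℝ × ℝ)) : Set (ℝ × ℝ) :=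
  {p | 0 < p.1 ∧ 0 < p.2 ∧ ENNReal.ofReal p.2 < decRe volume (phiSec E) p.1}

/-- The two-dimensional decreasing rearrangement `f₂*` of a function (layer-cake formula). -/
noncomputable def rearr2 (f : ℝ × ℝ → ℝ) (x : ℝ × ℝ) : ℝ≥0∞ :=
  ∫⁻ t in Set.Ioi (0 : ℝ), (starSet {p | t < |f p|}).indicator (fun _ => (1 : ℝ≥0∞)) x

/-- The open positive quadrant `ℝ₊²`. -/
def Quad : Set (ℝ × ℝ) := Set.Ioi 0 ×ˢ Set.Ioi 0

lemma decRe_mono {α : Type*} [MeasurableSpace α] (μ : Measure α) {g g' : α → ℝ≥0∞}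
    (h : g ≤ g') (t : ℝ) : decRe μ g t ≤ decRe μ g' t :=
  sInf_le_sInf fun _ hl => (measure_mono fun x hx => lt_of_lt_of_le hx (h x)).trans hl

lemma phiSec_mono {E F : Set (ℝ × ℝ)} (h : E ⊆ F) : phiSec E ≤ phiSec F :=
  fun _ => measure_mono fun _ hy => h hy

lemma starSet_mono {E F : Set (ℝ × ℝ)} (h : E ⊆ F) : starSet E ⊆ starSet F :=
  fun p ⟨hp₁, hp₂, hp⟩ => ⟨hp₁, hp₂, hp.trans_le (decRe_mono volume (phiSec_mono h) p.1)⟩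

lemma isLowerSet_setOf_mem_starSet (f : ℝ × ℝ → ℝ) (x : ℝ × ℝ) :
    IsLowerSet {s : ℝ | x ∈ starSet {p | s < |f p|}} :=
  fun _ _ hs h => starSet_mono (fun _ hp => hs.trans_lt hp) h

lemma rearr2_eq_volume (f : ℝ × ℝ → ℝ) (x : ℝ × ℝ) :
    rearr2 f x = volume ({s : ℝ | x ∈ starSet {p | s < |f p|}} ∩ Ioi 0) := by
  have hmeas := (isLowerSet_setOf_mem_starSet f x).ordConnected.measurableSet
  rw [← Measure.restrict_apply hmeas, ← lintegral_indicator_one hmeas]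
  -- both integrands are `if x ∈ starSet {p | s < |f p|} then 1 else 0`
  rfl

lemma IsLowerSet.volume_inter_Ioi_le {S : Set ℝ} (hS : IsLowerSet S) {t : ℝ} (ht : t ∉ S) :
    volume (S ∩ Ioi 0) ≤ ENNReal.ofReal t := by
  have hSt : S ⊆ Iio t := fun s hs => lt_of_not_ge fun hts => ht (hS hts hs)
  calc volume (S ∩ Ioi 0) ≤ volume (Ioo 0 t) :=
        measure_mono fun s ⟨hs, hs₀⟩ => ⟨hs₀, hSt hs⟩
    _ = ENNReal.ofReal t := by rw [Real.volume_Ioo, sub_zero]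

lemma IsLowerSet.le_volume_inter_Ioi {S : Set ℝ} (hS : IsLowerSet S) {t : ℝ} (ht : t ∈ S) :
    ENNReal.ofReal t ≤ volume (S ∩ Ioi 0) :=
  calc ENNReal.ofReal t = volume (Ioo 0 t) := by rw [Real.volume_Ioo, sub_zero]
    _ ≤ volume (S ∩ Ioi 0) := measure_mono fun _ hs => ⟨hS hs.2.le ht, hs.1⟩

theorem stmt5_general (f : ℝ × ℝ → ℝ) (t : ℝ) :
    {x | ENNReal.ofReal t < rearr2 f x} ⊆ starSet {p | t < |f p|} ∧
      starSet {p | t < |f p|} ⊆ {x | ENNReal.ofReal t ≤ rearr2 f x} := by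
  refine ⟨fun x hx => ?_, fun x hx => ?_⟩
  · by_contra hxt
    exact ((rearr2_eq_volume f x).le.trans
      ((isLowerSet_setOf_mem_starSet f x).volume_inter_Ioi_le hxt)).not_gt hx
  · exact ((isLowerSet_setOf_mem_starSet f x).le_volume_inter_Ioi hx).trans
      (rearr2_eq_volume f x).ge

theorem stmt5 (f : ℝ × ℝ → ℝ) (hf : Measurable f) (t : ℝ) (ht : 0 < t) :
    {x | ENNReal.ofReal t < rearr2 f x} ⊆ starSet {p | t < |f p|} ∧
      starSet {p | t < |f p|} ⊆ {x | ENNReal.ofReal t ≤ rearr2 f x} :=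
  stmt5_general f t
end

section
/- For measurable functions f, g on ℝ² and t > 0, χ_{{|f+g|>t}*}(x+y) ≤ χ_{{|f|>t/2}*}(x) + χ_{{|g|>t/2}*}(y) for all x, y ∈ ℝ₊² (addition of points coordinatewise). -/
open MeasureTheory Set ENNReal Filter

section DecreasingRearrangement

variable {α : Type*} [MeasurableSpace α] (μ : Measure α)

/-- The infimum defining `decRe` is attained: by continuity of `μ` from below, the distribution
function `l ↦ μ {g > l}` is right-continuous. -/
lemma measure_decRe_lt_le (g : α → ℝ≥0∞) (s : ℝ) :
    μ {x | decRe μ g s < g x} ≤ ENNReal.ofReal s := by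
  set S := {l : ℝ≥0∞ | μ {x | l < g x} ≤ ENNReal.ofReal s}
  obtain ⟨u, hu_anti, hu_tendsto, hu_mem⟩ :=
    exists_seq_tendsto_sInf (⟨⊤, by simp [S]⟩ : S.Nonempty) (OrderBot.bddBelow S)
  have hsub : {x | sInf S < g x} ⊆ ⋃ n, {x | u n < g x} := fun z hz =>
    mem_iUnion.2 (hu_tendsto.eventually_lt_const hz).exists
  have hmono : Monotone fun n => {x | u n < g x} := fun m n hmn z hz =>
    (hu_anti hmn).trans_lt hz
  calc μ {x | decRe μ g s < g x} ≤ μ (⋃ n, {x | u n < g x}) := measure_mono hsub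
    _ = ⨆ n, μ {x | u n < g x} := hmono.measure_iUnion
    _ ≤ ENNReal.ofReal s := iSup_le hu_mem

lemma decRe_add_le {g g₁ g₂ : α → ℝ≥0∞} (hg : ∀ x, g x ≤ g₁ x + g₂ x) {s₁ s₂ : ℝ}
    (hs₁ : 0 ≤ s₁) (hs₂ : 0 ≤ s₂) :
    decRe μ g (s₁ + s₂) ≤ decRe μ g₁ s₁ + decRe μ g₂ s₂ := by
  set l₁ := decRe μ g₁ s₁
  set l₂ := decRe μ g₂ s₂
  have hsub : {x | l₁ + l₂ < g x} ⊆ {x | l₁ < g₁ x} ∪ {x | l₂ < g₂ x} := by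
    intro x hx
    by_contra! h
    obtain ⟨h₁, h₂⟩ := not_or.1 h
    exact ((hg x).trans (add_le_add (not_lt.1 h₁) (not_lt.1 h₂))).not_gt hx
  refine sInf_le ?_
  calc μ {x | l₁ + l₂ < g x} ≤ μ ({x | l₁ < g₁ x} ∪ {x | l₂ < g₂ x}) := measure_mono hsub
    _ ≤ μ {x | l₁ < g₁ x} + μ {x | l₂ < g₂ x} := measure_union_le _ _
    _ ≤ ENNReal.ofReal s₁ + ENNReal.ofReal s₂ :=
      add_le_add (measure_decRe_lt_le μ g₁ s₁) (measure_decRe_lt_le μ g₂ s₂)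
    _ = ENNReal.ofReal (s₁ + s₂) := (ENNReal.ofReal_add hs₁ hs₂).symm

end DecreasingRearrangement

section StarSet

variable {E A B : Set (ℝ × ℝ)}

lemma phiSec_le_add_of_subset_union (h : E ⊆ A ∪ B) (s : ℝ) :
    phiSec E s ≤ phiSec A s + phiSec B s :=
  calc volume {z | (s, z) ∈ E} ≤ volume ({z | (s, z) ∈ A} ∪ {z | (s, z) ∈ B}) :=
        measure_mono fun _ hz => h hz
    _ ≤ phiSec A s + phiSec B s := measure_union_le _ _

lemma mem_starSet_or_of_subset_union (h : E ⊆ A ∪ B) {x y : ℝ × ℝ} (hx : x ∈ Quad)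
    (hy : y ∈ Quad) (hxy : x + y ∈ starSet E) : x ∈ starSet A ∨ y ∈ starSet B := by
  obtain ⟨hx₁, hx₂⟩ := hx
  obtain ⟨hy₁, hy₂⟩ := hy
  by_contra! hc
  have hA : decRe volume (phiSec A) x.1 ≤ ENNReal.ofReal x.2 :=
    not_lt.1 fun hlt => hc.1 ⟨hx₁, hx₂, hlt⟩
  have hB : decRe volume (phiSec B) y.1 ≤ ENNReal.ofReal y.2 :=
    not_lt.1 fun hlt => hc.2 ⟨hy₁, hy₂, hlt⟩
  refine hxy.2.2.not_ge ?_
  calc decRe volume (phiSec E) (x.1 + y.1)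
      ≤ decRe volume (phiSec A) x.1 + decRe volume (phiSec B) y.1 :=
        decRe_add_le volume (phiSec_le_add_of_subset_union h) (le_of_lt hx₁) (le_of_lt hy₁)
    _ ≤ ENNReal.ofReal x.2 + ENNReal.ofReal y.2 := add_le_add hA hB
    _ = ENNReal.ofReal (x.2 + y.2) := (ENNReal.ofReal_add (le_of_lt hx₂) (le_of_lt hy₂)).symm

end StarSet

lemma setOf_lt_abs_add_subset {β : Type*} (f g : β → ℝ) (t : ℝ) :
    {p | t < |f p + g p|} ⊆ {p | t / 2 < |f p|} ∪ {p | t / 2 < |g p|} := by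
  intro p (hp : t < |f p + g p|)
  by_contra! h
  have hfp : |f p| ≤ t / 2 := not_lt.1 fun hlt => h (Or.inl hlt)
  have hgp : |g p| ≤ t / 2 := not_lt.1 fun hlt => h (Or.inr hlt)
  exact hp.not_ge (by linarith [abs_add_le (f p) (g p)])

lemma indicator_one_le_add_of_imp {β : Type*} {S T U : Set β} {a b c : β}
    (h : a ∈ S → b ∈ T ∨ c ∈ U) :
    S.indicator (fun _ => (1 : ℝ≥0∞)) a
      ≤ T.indicator (fun _ => (1 : ℝ≥0∞)) b + U.indicator (fun _ => (1 : ℝ≥0∞)) c := by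
  by_cases ha : a ∈ S
  · rcases h ha with hb | hc
    · simp [indicator_of_mem ha, indicator_of_mem hb]
    · simp [indicator_of_mem ha, indicator_of_mem hc]
  · simp [indicator_of_notMem ha]

theorem stmt6_general (f g : ℝ × ℝ → ℝ) (t : ℝ) (x y : ℝ × ℝ) (hx : x ∈ Quad) (hy : y ∈ Quad) :
    (starSet {p | t < |f p + g p|}).indicator (fun _ => (1 : ℝ≥0∞)) (x + y)
      ≤ (starSet {p | t / 2 < |f p|}).indicator (fun _ => (1 : ℝ≥0∞)) x
        + (starSet {p | t / 2 < |g p|}).indicator (fun _ => (1 : ℝ≥0∞)) y :=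
  indicator_one_le_add_of_imp <|
    mem_starSet_or_of_subset_union (setOf_lt_abs_add_subset f g t) hx hy

theorem stmt6 (f g : ℝ × ℝ → ℝ) (hf : Measurable f) (hg : Measurable g)
    (t : ℝ) (ht : 0 < t) (x y : ℝ × ℝ) (hx : x ∈ Quad) (hy : y ∈ Quad) :
    (starSet {p | t < |f p + g p|}).indicator (fun _ => (1 : ℝ≥0∞)) (x + y)
      ≤ (starSet {p | t / 2 < |f p|}).indicator (fun _ => (1 : ℝ≥0∞)) x
        + (starSet {p | t / 2 < |g p|}).indicator (fun _ => (1 : ℝ≥0∞)) y :=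
  stmt6_general f g t x y hx hy
end

section
/- If g is a nonnegative simple measurable function on ℝ² and E ⊆ ℝ² is measurable, then ∫_E g(x) dx ≤ ∫_{E*} g₂*(x) dx. -/
open MeasureTheory Set ENNReal Filter

/-!
By the layer-cake formula, `∫_E |g| = ∫_{t > 0} |{|g| > t} ∩ E| dt` and
`∫_{E*} g₂* = ∫_{t > 0} |{|g| > t}* ∩ E*| dt`, so it suffices to show `|A ∩ B| ≤ |A* ∩ B*|`.
Slicing vertically, `|A ∩ B| ≤ ∫ min(φ_A, φ_B)`, while `A* ∩ B*` is the subgraph of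
`min(φ_A*, φ_B*)` over `(0, ∞)`. Finally `∫ min(f, g) ≤ ∫ min(f*, g*)` by the layer-cake formula
again: `μ({f > t} ∩ {g > t}) ≤ min(μ{f > t}, μ{g > t})`, with equality for the rearrangements,
whose superlevel sets are the intervals `(0, μ{f > t})` and `(0, μ{g > t})`.
-/

lemma volume_setOf_pos_ofReal_lt (m : ℝ≥0∞) :
    volume {s : ℝ | 0 < s ∧ ENNReal.ofReal s < m} = m := by
  rcases eq_or_ne m ∞ with rfl | hm
  · simp only [ofReal_lt_top, and_true]
    exact Real.volume_Ioi
  · have : {s : ℝ | 0 < s ∧ ENNReal.ofReal s < m} = Ioo 0 m.toReal := by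
      ext s
      exact and_congr_right fun hs => ofReal_lt_iff_lt_toReal hs.le hm
    rw [this, Real.volume_Ioo, sub_zero, ofReal_toReal hm]

section Subgraph

variable {α : Type*} [MeasurableSpace α] (μ : Measure α) {f : α → ℝ≥0∞}

lemma measurableSet_subgraph (hf : Measurable f) :
    MeasurableSet {q : α × ℝ | 0 < q.2 ∧ ENNReal.ofReal q.2 < f q.1} :=
  (measurable_snd measurableSet_Ioi).inter
    (measurableSet_lt (measurable_ofReal.comp measurable_snd) (hf.comp measurable_fst))

lemma measure_prod_subgraph (hf : Measurable f) :
    μ.prod volume {q : α × ℝ | 0 < q.2 ∧ ENNReal.ofReal q.2 < f q.1} = ∫⁻ x, f x ∂μ := by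
  rw [Measure.prod_apply (measurableSet_subgraph hf)]
  exact lintegral_congr fun x => volume_setOf_pos_ofReal_lt (f x)

lemma lintegral_eq_lintegral_meas_ofReal_lt [SFinite μ] (hf : Measurable f) :
    ∫⁻ x, f x ∂μ = ∫⁻ t in Ioi 0, μ {x | ENNReal.ofReal t < f x} := by
  rw [← measure_prod_subgraph μ hf, Measure.prod_apply_symm (measurableSet_subgraph hf),
    ← lintegral_indicator measurableSet_Ioi]
  refine lintegral_congr fun t => ?_
  by_cases ht : 0 < t <;> simp [ht]

end Subgraph

section DecreasingRearrangement

variable {α : Type*} [MeasurableSpace α] (μ : Measure α) (f : α → ℝ≥0∞)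

lemma antitone_decRe : Antitone (decRe μ f) := fun _ _ hst =>
  sInf_le_sInf fun _ hl => hl.trans (ofReal_le_ofReal hst)

lemma measurable_decRe : Measurable (decRe μ f) := (antitone_decRe μ f).measurable

lemma decRe_le_iff {c : ℝ≥0∞} (hc : c ≠ ∞) (t : ℝ) :
    decRe μ f t ≤ c ↔ μ {x | c < f x} ≤ ENNReal.ofReal t := by
  refine ⟨fun h => ?_, fun h => sInf_le h⟩
  obtain ⟨u, hu_anti, hu_mem, hu_lim⟩ := exists_seq_strictAnti_tendsto' hc.lt_top
  have hU : {x | c < f x} = ⋃ n, {x | u n < f x} := by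
    ext x
    simp only [mem_ofPred_eq, mem_iUnion]
    exact ⟨fun hx => (hu_lim.eventually (gt_mem_nhds hx)).exists,
      fun ⟨n, hn⟩ => (hu_mem n).1.trans hn⟩
  have hmono : Monotone fun n => {x | u n < f x} :=
    fun m n hmn x hx => (hu_anti.antitone hmn).trans_lt hx
  rw [hU, hmono.measure_iUnion]
  refine iSup_le fun n => ?_
  obtain ⟨l, hl, hlu⟩ := sInf_lt_iff.mp (h.trans_lt (hu_mem n).1)
  exact (measure_mono fun x hx => hlu.trans hx).trans hl

lemma lt_decRe_iff {c : ℝ≥0∞} (hc : c ≠ ∞) (t : ℝ) :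
    c < decRe μ f t ↔ ENNReal.ofReal t < μ {x | c < f x} := by
  rw [← not_le, ← not_le, decRe_le_iff μ f hc]

lemma lintegral_min_le_setLIntegral_min_decRe [SFinite μ] {f g : α → ℝ≥0∞}
    (hf : Measurable f) (hg : Measurable g) :
    ∫⁻ x, min (f x) (g x) ∂μ ≤ ∫⁻ s in Ioi 0, min (decRe μ f s) (decRe μ g s) := by
  rw [lintegral_eq_lintegral_meas_ofReal_lt μ (hf.min hg),
    lintegral_eq_lintegral_meas_ofReal_lt _ ((measurable_decRe μ f).min (measurable_decRe μ g))]
  refine lintegral_mono fun t => ?_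
  have hlevel : {s | ENNReal.ofReal t < min (decRe μ f s) (decRe μ g s)} ∩ Ioi 0 =
      {s | 0 < s ∧ ENNReal.ofReal s <
        min (μ {x | ENNReal.ofReal t < f x}) (μ {x | ENNReal.ofReal t < g x})} := by
    ext s
    simp only [mem_inter_iff, mem_ofPred_eq, mem_Ioi, lt_min_iff,
      lt_decRe_iff μ _ ofReal_ne_top]
    tauto
  calc μ {x | ENNReal.ofReal t < min (f x) (g x)}
      ≤ min (μ {x | ENNReal.ofReal t < f x}) (μ {x | ENNReal.ofReal t < g x}) :=
        le_min (measure_mono <| ofPred_subset_ofPred.2 fun _ hx => hx.trans_le (min_le_left _ _))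
          (measure_mono <| ofPred_subset_ofPred.2 fun _ hx => hx.trans_le (min_le_right _ _))
    _ = _ := by
        rw [Measure.restrict_apply' measurableSet_Ioi, hlevel, volume_setOf_pos_ofReal_lt]

end DecreasingRearrangement

lemma mem_starSet_iff {E : Set (ℝ × ℝ)} {p : ℝ × ℝ} :
    p ∈ starSet E ↔
      0 < p.1 ∧ 0 < p.2 ∧ ENNReal.ofReal p.1 < volume {x | ENNReal.ofReal p.2 < phiSec E x} :=
  and_congr_right' <| and_congr_right' <| lt_decRe_iff _ _ ofReal_ne_top _

lemma measurableSet_starSet (E : Set (ℝ × ℝ)) : MeasurableSet (starSet E) :=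
  (measurable_fst measurableSet_Ioi).inter <| (measurable_snd measurableSet_Ioi).inter <|
    measurableSet_lt (measurable_ofReal.comp measurable_snd)
      ((measurable_decRe _ _).comp measurable_fst)

lemma measurableSet_setOf_mem_starSet {ι : Type*} [MeasurableSpace ι]
    {S : Set (ι × (ℝ × ℝ))} (hS : MeasurableSet S) :
    MeasurableSet {q : (ℝ × ℝ) × ι | q.1 ∈ starSet {p | (q.2, p) ∈ S}} := by
  have hφ : Measurable fun r : ι × ℝ => phiSec {p | (r.1, p) ∈ S} r.2 :=
    measurable_measure_prodMk_left (hS.preimage MeasurableEquiv.prodAssoc.measurable)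
  have hdist : Measurable fun r : ℝ × ι =>
      volume {x | ENNReal.ofReal r.1 < phiSec {p | (r.2, p) ∈ S} x} :=
    measurable_measure_prodMk_left <| measurableSet_lt
      (measurable_ofReal.comp (measurable_fst.comp measurable_fst))
      (hφ.comp (measurable_snd.comp measurable_fst |>.prodMk measurable_snd))
  simp only [mem_starSet_iff]
  exact (measurable_fst.fst measurableSet_Ioi).inter <|
    (measurable_fst.snd measurableSet_Ioi).inter <|
    measurableSet_lt (measurable_ofReal.comp measurable_fst.fst)
      (hdist.comp (measurable_fst.snd.prodMk measurable_snd))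

lemma starSet_inter_starSet (A B : Set (ℝ × ℝ)) :
    starSet A ∩ starSet B = {p | 0 < p.2 ∧ ENNReal.ofReal p.2 <
      (Ioi 0).indicator (fun x => min (decRe volume (phiSec A) x) (decRe volume (phiSec B) x))
        p.1} := by
  ext ⟨x, y⟩
  by_cases hx : 0 < x
  · simp only [starSet, mem_inter_iff, mem_ofPred_eq, hx, true_and, mem_Ioi, indicator_of_mem,
      lt_inf_iff]
    tauto
  · simp [starSet, hx]

lemma volume_starSet_inter_starSet (A B : Set (ℝ × ℝ)) :
    volume (starSet A ∩ starSet B) =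
      ∫⁻ x in Ioi 0, min (decRe volume (phiSec A) x) (decRe volume (phiSec B) x) := by
  rw [starSet_inter_starSet, Measure.volume_eq_prod, measure_prod_subgraph,
    lintegral_indicator measurableSet_Ioi]
  exact ((measurable_decRe _ _).min (measurable_decRe _ _)).indicator measurableSet_Ioi

lemma volume_inter_le_volume_starSet_inter {A B : Set (ℝ × ℝ)} (hA : MeasurableSet A)
    (hB : MeasurableSet B) : volume (A ∩ B) ≤ volume (starSet A ∩ starSet B) :=
  calc volume (A ∩ B) = ∫⁻ x, phiSec (A ∩ B) x := by
        rw [Measure.volume_eq_prod, Measure.prod_apply (hA.inter hB)]; rfl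
    _ ≤ ∫⁻ x, min (phiSec A x) (phiSec B x) :=
        lintegral_mono fun x => le_min (measure_mono fun y hy => hy.1)
          (measure_mono fun y hy => hy.2)
    _ ≤ ∫⁻ x in Ioi 0, min (decRe volume (phiSec A) x) (decRe volume (phiSec B) x) :=
        lintegral_min_le_setLIntegral_min_decRe _ (measurable_measure_prodMk_left hA)
          (measurable_measure_prodMk_left hB)
    _ = volume (starSet A ∩ starSet B) := (volume_starSet_inter_starSet A B).symm

lemma setLIntegral_ofReal_abs {f : ℝ × ℝ → ℝ} (hf : Measurable f) (F : Set (ℝ × ℝ)) :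
    ∫⁻ x in F, ENNReal.ofReal |f x| = ∫⁻ t in Ioi 0, volume ({p | t < |f p|} ∩ F) := by
  rw [lintegral_eq_lintegral_meas_lt _ (ae_of_all _ fun x => abs_nonneg (f x))
    hf.abs.aemeasurable]
  exact lintegral_congr fun t => Measure.restrict_apply (measurableSet_lt measurable_const hf.abs)

lemma setLIntegral_rearr2 {f : ℝ × ℝ → ℝ} (hf : Measurable f) (F : Set (ℝ × ℝ)) :
    ∫⁻ x in F, rearr2 f x = ∫⁻ t in Ioi 0, volume (starSet {p | t < |f p|} ∩ F) := by
  have hS : MeasurableSet {q : ℝ × (ℝ × ℝ) | q.1 < |f q.2|} :=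
    measurableSet_lt measurable_fst (hf.comp measurable_snd).abs
  have hind : Measurable ({q : (ℝ × ℝ) × ℝ | q.1 ∈ starSet {p | (q.2, p) ∈
      {q : ℝ × (ℝ × ℝ) | q.1 < |f q.2|}}}.indicator fun _ => (1 : ℝ≥0∞)) :=
    measurable_const.indicator (measurableSet_setOf_mem_starSet hS)
  have hmeas : Measurable (Function.uncurry fun (x : ℝ × ℝ) (t : ℝ) =>
      (starSet {p | t < |f p|}).indicator (fun _ => (1 : ℝ≥0∞)) x) := hind
  simp only [rearr2]
  rw [lintegral_lintegral_swap hmeas.aemeasurable]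
  refine lintegral_congr fun t => ?_
  rw [lintegral_indicator_const (measurableSet_starSet _), one_mul,
    Measure.restrict_apply (measurableSet_starSet _)]

theorem stmt14_general (g : MeasureTheory.SimpleFunc (ℝ × ℝ) ℝ)
    (E : Set (ℝ × ℝ)) (hE : MeasurableSet E) :
    ∫⁻ x in E, ENNReal.ofReal (g x) ≤ ∫⁻ x in starSet E, rearr2 (⇑g) x :=
  calc ∫⁻ x in E, ENNReal.ofReal (g x)
      ≤ ∫⁻ x in E, ENNReal.ofReal |g x| :=
        lintegral_mono fun _ => ofReal_le_ofReal (le_abs_self _)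
    _ = ∫⁻ t in Ioi 0, volume ({p | t < |g p|} ∩ E) := setLIntegral_ofReal_abs g.measurable E
    _ ≤ ∫⁻ t in Ioi 0, volume (starSet {p | t < |g p|} ∩ starSet E) :=
        lintegral_mono fun _ => volume_inter_le_volume_starSet_inter
          (measurableSet_lt measurable_const g.measurable.abs) hE
    _ = ∫⁻ x in starSet E, rearr2 g x := (setLIntegral_rearr2 g.measurable _).symm

theorem stmt14 (g : MeasureTheory.SimpleFunc (ℝ × ℝ) ℝ) (hg : ∀ x, 0 ≤ g x)
    (E : Set (ℝ × ℝ)) (hE : MeasurableSet E) :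
    ∫⁻ x in E, ENNReal.ofReal (g x) ≤ ∫⁻ x in starSet E, rearr2 (⇑g) x :=
  stmt14_general g E hE
end

section
/- If g and h are measurable functions on ℝ and f(x,y) = g(x)h(y), then f₂*(s,t) = g*(s)h*(t) for all s,t > 0. -/
open MeasureTheory Set ENNReal Filter

/-!
For `τ > 0` the `x`-section of `{τ < |g(x) h(y)|}` is `{y | τ / |g x| < |h y|}`, so its measure
`φ(x)` is a monotone, left-continuous function of `|g x|`; such functions commute with decreasing
rearrangement, giving `φ*(s) = |{τ / g*(s) < |h|}|`. By the inversion `u < h*(t) ↔ t < |{u < |h|}|`,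
the point `(s, t)` lies in the rearranged level set `{τ < |f|}*` exactly when `τ < g*(s) h*(t)`, and
the layer-cake integral over `τ` returns `g*(s) h*(t)`.
-/

section Distribution

variable {α : Type*} [MeasurableSpace α] (μ : Measure α) (F : α → ℝ≥0∞)

/-- The distribution function `b ↦ μ {b < F}` is right-continuous. -/
lemma exists_lt_measure_setOf_lt {b l : ℝ≥0∞} (hl : l < μ {x | b < F x}) :
    ∃ b', b < b' ∧ l < μ {x | b' < F x} := by
  have hb : b < ∞ := by
    by_contra! hb
    simp [top_le_iff.mp hb] at hl
  obtain ⟨u, hu_anti, hu_mem, hu_lim⟩ := exists_seq_strictAnti_tendsto' hb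
  have hunion : {x | b < F x} = ⋃ n, {x | u n < F x} := by
    ext x
    rw [mem_iUnion]
    exact ⟨fun hx => (hu_lim.eventually (gt_mem_nhds hx)).exists,
      fun ⟨n, hn⟩ => (hu_mem n).1.trans hn⟩
  have hmono : Monotone fun n => {x | u n < F x} :=
    fun n m hnm x hx => (hu_anti.antitone hnm).trans_lt hx
  rw [hunion, hmono.measure_iUnion] at hl
  obtain ⟨n, hn⟩ := lt_iSup_iff.mp hl
  exact ⟨u n, (hu_mem n).1, hn⟩

lemma measure_setOf_decRe_lt_le (t : ℝ) :
    μ {x | decRe μ F t < F x} ≤ ENNReal.ofReal t := by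
  by_contra! hcon
  obtain ⟨b, hb, hlt⟩ := exists_lt_measure_setOf_lt μ F hcon
  obtain ⟨l, hl, hlb⟩ := sInf_lt_iff.mp hb
  exact hlt.not_ge ((measure_mono fun x hx => hlb.trans hx).trans hl)

lemma ofReal_lt_measure_iff_lt_decRe (t : ℝ) (u : ℝ≥0∞) :
    ENNReal.ofReal t < μ {x | u < F x} ↔ u < decRe μ F t := by
  constructor
  · intro hlt
    by_contra! hle
    exact hlt.not_ge
      ((measure_mono fun x hx => hle.trans_lt hx).trans (measure_setOf_decRe_lt_le μ F t))
  · intro hu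
    by_contra! hle
    exact hu.not_ge (sInf_le hle)

/-- `hΦ_left` says that `Φ` is left-continuous and vanishes at `0`. -/
lemma decRe_comp_of_monotone {Φ : ℝ≥0∞ → ℝ≥0∞} (hΦ : Monotone Φ)
    (hΦ_left : ∀ a l, l < Φ a → ∃ a' < a, l < Φ a') (t : ℝ) :
    decRe μ (Φ ∘ F) t = Φ (decRe μ F t) := by
  apply le_antisymm
  · exact sInf_le ((measure_mono fun x hx => hΦ.reflect_lt hx).trans
      (measure_setOf_decRe_lt_le μ F t))
  · refine le_sInf fun l hl => ?_
    by_contra! hlt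
    obtain ⟨a', ha', hla'⟩ := hΦ_left _ _ hlt
    have hsub : {x | a' < F x} ⊆ {x | l < (Φ ∘ F) x} :=
      fun x hx => hla'.trans_le (hΦ hx.le)
    exact ((ofReal_lt_measure_iff_lt_decRe μ F t a').mpr ha').not_ge
      ((measure_mono hsub).trans hl)

end Distribution

section Quotient

variable {β : Type*} [MeasurableSpace β] (ν : Measure β) (H : β → ℝ≥0∞) {c : ℝ≥0∞}

lemma exists_lt_measure_setOf_div_lt (hc0 : c ≠ 0) (hct : c ≠ ∞) {a l : ℝ≥0∞}
    (hl : l < ν {y | c / a < H y}) :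
    ∃ a' < a, l < ν {y | c / a' < H y} := by
  obtain ⟨b, hb, hlb⟩ := exists_lt_measure_setOf_lt ν H hl
  refine ⟨c / b, ?_, ?_⟩
  · rw [ENNReal.div_lt_iff (Or.inr hc0) (Or.inr hct)] at hb
    exact ENNReal.div_lt_of_lt_mul (by rwa [mul_comm])
  · rwa [ENNReal.div_div_cancel hc0 hct]

lemma decRe_measure_setOf_div_lt (hc0 : c ≠ 0) (hct : c ≠ ∞) {α : Type*} [MeasurableSpace α]
    (μ : Measure α) (G : α → ℝ≥0∞) (t : ℝ) :
    decRe μ (fun x => ν {y | c / G x < H y}) t = ν {y | c / decRe μ G t < H y} :=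
  decRe_comp_of_monotone (Φ := fun a => ν {y | c / a < H y}) μ G
    (fun _ _ hab => measure_mono fun _ hy => (ENNReal.div_le_div_left hab c).trans_lt hy)
    (fun _ _ => exists_lt_measure_setOf_div_lt ν H hc0 hct) t

end Quotient

lemma phiSec_setOf_lt_abs_mul (g h : ℝ → ℝ) {τ : ℝ} (hτ : 0 < τ) :
    phiSec {p : ℝ × ℝ | τ < |g p.1 * h p.2|}
      = fun x => volume {y | ENNReal.ofReal τ / ENNReal.ofReal |g x| < ENNReal.ofReal |h y|} := by
  funext x
  refine congrArg volume (Set.ext fun y => ?_)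
  change τ < |g x * h y| ↔ ENNReal.ofReal τ / ENNReal.ofReal |g x| < ENNReal.ofReal |h y|
  rw [ENNReal.div_lt_iff (Or.inr (ENNReal.ofReal_pos.mpr hτ).ne') (Or.inr ofReal_ne_top),
    mul_comm, ← ENNReal.ofReal_mul (abs_nonneg _), ← abs_mul,
    ENNReal.ofReal_lt_ofReal_iff_of_nonneg hτ.le]

lemma mem_starSet_setOf_lt_abs_mul_iff (g h : ℝ → ℝ) {s t τ : ℝ} (hs : 0 < s) (ht : 0 < t)
    (hτ : 0 < τ) :
    (s, t) ∈ starSet {p : ℝ × ℝ | τ < |g p.1 * h p.2|}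
      ↔ ENNReal.ofReal τ < decRe volume (fun x => ENNReal.ofReal |g x|) s *
          decRe volume (fun y => ENNReal.ofReal |h y|) t := by
  have hc0 : ENNReal.ofReal τ ≠ 0 := (ENNReal.ofReal_pos.mpr hτ).ne'
  change 0 < s ∧ 0 < t ∧ _ ↔ _
  rw [and_iff_right hs, and_iff_right ht, phiSec_setOf_lt_abs_mul g h hτ,
    decRe_measure_setOf_div_lt volume _ hc0 ofReal_ne_top, ofReal_lt_measure_iff_lt_decRe,
    ENNReal.div_lt_iff (Or.inr hc0) (Or.inr ofReal_ne_top), mul_comm]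

lemma volume_preimage_ofReal_Iio_inter_Ioi (c : ℝ≥0∞) :
    volume (ENNReal.ofReal ⁻¹' Iio c ∩ Ioi 0) = c := by
  rcases eq_or_ne c ∞ with rfl | hc
  · rw [eq_univ_of_forall (s := ENNReal.ofReal ⁻¹' Iio ∞) fun _ => ofReal_lt_top, univ_inter,
      Real.volume_Ioi]
  · have hIoo : ENNReal.ofReal ⁻¹' Iio c ∩ Ioi 0 = Ioo 0 c.toReal := by
      ext u
      simp only [mem_inter_iff, mem_preimage, mem_Iio, mem_Ioi, mem_Ioo]
      exact ⟨fun ⟨hu, hu0⟩ => ⟨hu0, (ENNReal.ofReal_lt_iff_lt_toReal hu0.le hc).mp hu⟩,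
        fun ⟨hu0, hu⟩ => ⟨(ENNReal.ofReal_lt_iff_lt_toReal hu0.le hc).mpr hu, hu0⟩⟩
    rw [hIoo, Real.volume_Ioo, sub_zero, ENNReal.ofReal_toReal hc]

theorem stmt17_general (g h : ℝ → ℝ) :
    ∀ s t : ℝ, 0 < s → 0 < t →
      rearr2 (fun p => g p.1 * h p.2) (s, t)
        = decRe volume (fun x => ENNReal.ofReal |g x|) s *
            decRe volume (fun y => ENNReal.ofReal |h y|) t := by
  intro s t hs ht
  set P := decRe volume (fun x => ENNReal.ofReal |g x|) s *
    decRe volume (fun y => ENNReal.ofReal |h y|) t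
  calc rearr2 (fun p => g p.1 * h p.2) (s, t)
      = ∫⁻ τ in Ioi 0, (ENNReal.ofReal ⁻¹' Iio P).indicator (fun _ => 1) τ :=
        setLIntegral_congr_fun measurableSet_Ioi fun τ hτ => by
          simp only [indicator, mem_starSet_setOf_lt_abs_mul_iff g h hs ht hτ, mem_preimage,
            mem_Iio]
          rfl
    _ = volume (ENNReal.ofReal ⁻¹' Iio P ∩ Ioi 0) := by
        rw [setLIntegral_indicator (measurable_ofReal measurableSet_Iio), setLIntegral_one]
    _ = P := volume_preimage_ofReal_Iio_inter_Ioi P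

theorem stmt17 (g h : ℝ → ℝ) (hg : Measurable g) (hh : Measurable h) :
    ∀ s t : ℝ, 0 < s → 0 < t →
      rearr2 (fun p => g p.1 * h p.2) (s, t)
        = decRe volume (fun x => ENNReal.ofReal |g x|) s *
            decRe volume (fun y => ENNReal.ofReal |h y|) t :=
  stmt17_general g h
end
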